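/- arXiv:2308.13717 — 2 statements merged into one kernel-verified Lean document; each statement's English description precedes it below -/
import Mathlib

section
/- Let σ₁,…,σₙ > 0 be constants and define V(x,t) = Σᵢ xᵢ + Σ_{i≠j} e^{σᵢ²(t−T)/8} e^{σⱼ²(t−T)/8} xᵢ^{1/2} xⱼ^{1/2} on ℝ₊ⁿ × [0,T]. Then V satisfies the PDE ∂V/∂t + (1/2) Σᵢ σᵢ² xᵢ² ∂²V/∂xᵢ² = 0 on ℝ₊ⁿ × [0,T], with terminal value V(x,T) = (x₁^{1/2} + ⋯ + xₙ^{1/2})². -/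
/-!
Expanding the square, `V = ∑ᵢ (1 - aᵢ²) xᵢ + S²` with `aᵢ(t) = exp (σᵢ² (t - T) / 8)` and
`S = ∑ᵢ aᵢ √xᵢ`; at `t = T` all `aᵢ = 1`, which gives the terminal value. As a function of `xᵢ`
alone, `V = xᵢ + 2 aᵢ Rᵢ √xᵢ + const` with `Rᵢ = S - aᵢ √xᵢ`, so
`½ σᵢ² xᵢ² ∂²V/∂xᵢ² = -¼ σᵢ² aᵢ Rᵢ √xᵢ`. Since `aᵢ' = σᵢ² aᵢ / 8`, the time derivative is
`∂V/∂t = ∑ᵢ ¼ σᵢ² aᵢ √xᵢ (S - aᵢ √xᵢ)`, and the two cancel index by index.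
-/

open Finset Real Function Filter Topology

theorem sum_sum_erase_mul_eq_sq_sub {ι R : Type*} [DecidableEq ι] [CommRing R] (s : Finset ι)
    (u : ι → R) :
    ∑ i ∈ s, ∑ j ∈ s.erase i, u i * u j = (∑ i ∈ s, u i) ^ 2 - ∑ i ∈ s, u i ^ 2 := by
  rw [sq, sum_mul_sum, ← sum_sub_distrib]
  refine sum_congr rfl fun i hi => ?_
  rw [← add_sum_erase s _ hi]
  ring

theorem sq_mul_iteratedDeriv_two_of_eq_add_mul_sqrt {f : ℝ → ℝ} {B C x : ℝ} (hx : 0 < x)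
    (hf : ∀ y, 0 ≤ y → f y = y + B * √y + C) :
    x ^ 2 * iteratedDeriv 2 f x = -(B / 4) * √x := by
  have hf_rpow : f =ᶠ[𝓝 x] fun y => y + B * y ^ ((1:ℝ)/2) + C := by
    filter_upwards [Ioi_mem_nhds hx] with y hy
    rw [hf y (le_of_lt hy), sqrt_eq_rpow]
  have hderiv : deriv (fun y => y + B * y ^ ((1:ℝ)/2) + C)
      =ᶠ[𝓝 x] fun y => 1 + B * ((1/2) * y ^ ((1:ℝ)/2 - 1)) := by
    filter_upwards [Ioi_mem_nhds hx] with y hy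
    exact (((hasDerivAt_id y).add
      ((hasDerivAt_rpow_const (Or.inl (ne_of_gt hy))).const_mul B)).add_const C).deriv
  have hderiv2 : HasDerivAt (fun y => 1 + B * ((1/2) * y ^ ((1:ℝ)/2 - 1)))
      (B * ((1/2) * (((1:ℝ)/2 - 1) * x ^ ((1:ℝ)/2 - 1 - 1)))) x :=
    (((hasDerivAt_rpow_const (Or.inl hx.ne')).const_mul _).const_mul B).const_add 1
  have hpow : x ^ 2 * x ^ ((1:ℝ)/2 - 1 - 1) = x ^ ((1:ℝ)/2) := by
    rw [← rpow_two, ← rpow_add hx]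
    norm_num
  rw [hf_rpow.iteratedDeriv_eq, iteratedDeriv_succ, iteratedDeriv_one, hderiv.deriv_eq,
    hderiv2.deriv, sqrt_eq_rpow]
  linear_combination (-(B / 4)) * hpow

section

variable {ι : Type*} [Fintype ι]

noncomputable def sqrtQuadratic (a x : ι → ℝ) : ℝ :=
  ∑ i, (1 - a i ^ 2) * x i + (∑ i, a i * √(x i)) ^ 2

theorem sum_add_sum_sum_erase_rpow_eq_sqrtQuadratic [DecidableEq ι] (a x : ι → ℝ)
    (hx : ∀ i, 0 ≤ x i) :
    ∑ i, x i + ∑ i, ∑ j ∈ univ.erase i, a i * a j * (x i ^ ((1:ℝ)/2) * x j ^ ((1:ℝ)/2))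
      = sqrtQuadratic a x := by
  have hpair : ∀ i j, a i * a j * (x i ^ ((1:ℝ)/2) * x j ^ ((1:ℝ)/2))
      = (a i * √(x i)) * (a j * √(x j)) := fun i j => by
    rw [sqrt_eq_rpow, sqrt_eq_rpow]; ring
  simp_rw [hpair, sum_sum_erase_mul_eq_sq_sub, mul_pow, sq_sqrt (hx _)]
  rw [sqrtQuadratic]
  simp_rw [sub_mul, one_mul, sum_sub_distrib]
  ring

theorem exists_sqrtQuadratic_update_eq [DecidableEq ι] (a x : ι → ℝ) (i : ι) :
    ∃ C, ∀ y, 0 ≤ y → sqrtQuadratic a (update x i y)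
      = y + 2 * a i * (∑ j, a j * √(x j) - a i * √(x i)) * √y + C := by
  refine ⟨∑ j ∈ univ.erase i, (1 - a j ^ 2) * x j + (∑ j ∈ univ.erase i, a j * √(x j)) ^ 2,
    fun y hy => ?_⟩
  have hrest (g : ι → ℝ → ℝ) :
      ∑ j ∈ univ.erase i, g j (update x i y j) = ∑ j ∈ univ.erase i, g j (x j) :=
    sum_congr rfl fun j hj => by rw [update_of_ne (ne_of_mem_erase hj)]
  rw [sqrtQuadratic, ← add_sum_erase _ _ (mem_univ i), ← add_sum_erase _ _ (mem_univ i),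
    ← sum_erase_eq_sub (mem_univ i), hrest fun j z => (1 - a j ^ 2) * z,
    hrest fun j z => a j * √z, update_self]
  linear_combination (a i ^ 2) * sq_sqrt hy

theorem hasDerivAt_sqrtQuadratic {a : ℝ → ι → ℝ} {a' : ι → ℝ} {t : ℝ} (x : ι → ℝ)
    (ha : ∀ i, HasDerivAt (fun s => a s i) (a' i) t) :
    HasDerivAt (fun s => sqrtQuadratic (a s) x)
      (∑ i, -(2 * a t i * a' i) * x i + 2 * (∑ i, a t i * √(x i)) * ∑ i, a' i * √(x i)) t := by
  have h := (HasDerivAt.fun_sum (u := univ) fun i _ =>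
    (((ha i).fun_pow 2).const_sub 1).mul_const (x i)).add
    ((HasDerivAt.fun_sum (u := univ) fun i _ => (ha i).mul_const (√(x i))).fun_pow 2)
  refine h.congr_deriv ?_
  simp only [Nat.cast_ofNat, Nat.add_one_sub_one, pow_one, neg_mul, sum_neg_distrib]

end

theorem sqrt_claim_pde_general (n : ℕ) (T : ℝ) (σ : Fin n → ℝ)
    (V : (Fin n → ℝ) → ℝ → ℝ)
    (hV : ∀ (x : Fin n → ℝ) (t : ℝ), V x t = (∑ i, x i) +
      ∑ i, ∑ j ∈ Finset.univ.erase i,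
        Real.exp (σ i ^ 2 * (t - T) / 8) * Real.exp (σ j ^ 2 * (t - T) / 8) *
          (x i ^ ((1:ℝ)/2) * x j ^ ((1:ℝ)/2))) :
    ∀ x : Fin n → ℝ, (∀ i, 0 < x i) → ∀ t ∈ Set.Icc (0:ℝ) T,
      (deriv (fun s => V x s) t
        + (1/2) * ∑ i, σ i ^ 2 * x i ^ 2 *
            iteratedDeriv 2 (fun y => V (Function.update x i y) t) (x i) = 0) ∧
      V x T = (∑ i, x i ^ ((1:ℝ)/2)) ^ 2 := by
  intro x hx t _
  set a : ℝ → Fin n → ℝ := fun s i => exp (σ i ^ 2 * (s - T) / 8) with ha_def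
  have hV_eq (z : Fin n → ℝ) (hz : ∀ i, 0 ≤ z i) (s : ℝ) : V z s = sqrtQuadratic (a s) z := by
    rw [hV, ← sum_add_sum_sum_erase_rpow_eq_sqrtQuadratic _ _ hz]
  have ha (i : Fin n) : HasDerivAt (fun s => a s i) (σ i ^ 2 / 8 * a t i) t := by
    have := ((((hasDerivAt_id' t).sub_const T).const_mul (σ i ^ 2)).div_const 8).exp
    exact this.congr_deriv (by simp only [ha_def]; ring)
  have hx₀ i : 0 ≤ x i := (hx i).le
  refine ⟨?_, ?_⟩
  · have htime := (hasDerivAt_sqrtQuadratic x ha).deriv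
    have hspace (i : Fin n) : x i ^ 2 * iteratedDeriv 2 (fun y => V (update x i y) t) (x i)
        = -(2 * a t i * (∑ j, a t j * √(x j) - a t i * √(x i)) / 4) * √(x i) := by
      obtain ⟨C, hC⟩ := exists_sqrtQuadratic_update_eq (a t) x i
      refine sq_mul_iteratedDeriv_two_of_eq_add_mul_sqrt (C := C) (hx i) fun y hy => ?_
      rw [hV_eq _ ((forall_update_iff x fun _ z => 0 ≤ z).2 ⟨hy, fun j _ => hx₀ j⟩), hC y hy]
    rw [show (fun s => V x s) = fun s => sqrtQuadratic (a s) x from funext (hV_eq x hx₀), htime]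
    -- abbreviated so that `mul_sum` does not distribute into it
    set S := ∑ j, a t j * √(x j)
    simp_rw [mul_assoc (σ _ ^ 2), hspace, mul_sum, ← sum_add_distrib]
    refine sum_eq_zero fun i _ => ?_
    linear_combination (σ i ^ 2 / 4 * a t i ^ 2) * sq_sqrt (hx₀ i)
  · simp [hV_eq x hx₀, sqrtQuadratic, ha_def, sqrt_eq_rpow]

/-- The function `V(x,t) = ∑ᵢ xᵢ + ∑_{i≠j} e^{σᵢ²(t−T)/8} e^{σⱼ²(t−T)/8} xᵢ^{1/2} xⱼ^{1/2}`
satisfies `∂V/∂t + (1/2)∑ᵢ σᵢ² xᵢ² ∂²V/∂xᵢ² = 0` with terminal value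
`V(x,T) = (∑ᵢ xᵢ^{1/2})²`. -/
theorem sqrt_claim_pde (n : ℕ) (T : ℝ) (hT : 0 < T) (σ : Fin n → ℝ)
    (hσ : ∀ i, 0 < σ i) (V : (Fin n → ℝ) → ℝ → ℝ)
    (hV : ∀ (x : Fin n → ℝ) (t : ℝ), V x t = (∑ i, x i) +
      ∑ i, ∑ j ∈ Finset.univ.erase i,
        Real.exp (σ i ^ 2 * (t - T) / 8) * Real.exp (σ j ^ 2 * (t - T) / 8) *
          (x i ^ ((1:ℝ)/2) * x j ^ ((1:ℝ)/2))) :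
    ∀ x : Fin n → ℝ, (∀ i, 0 < x i) → ∀ t ∈ Set.Icc (0:ℝ) T,
      (deriv (fun s => V x s) t
        + (1/2) * ∑ i, σ i ^ 2 * x i ^ 2 *
            iteratedDeriv 2 (fun y => V (Function.update x i y) t) (x i) = 0) ∧
      V x T = (∑ i, x i ^ ((1:ℝ)/2)) ^ 2 :=
  sqrt_claim_pde_general n T σ V hV
end

section
/- Let σ > 0, K > 0, T > 0, and define V(x,t) = N(z₀)x + (1 − N(z₁))K for (x,t) ∈ ℝ₊ × [0,T), where z₀ = (log(x/K) + σ²(T−t)/2)/(σ√(T−t)), z₁ = z₀ − σ√(T−t), and N is the standard normal CDF. Then V satisfies the PDE ∂V/∂t + (1/2)σ²x² ∂²V/∂x² = 0 on ℝ₊ × [0,T), and its spatial derivative is ∂V/∂x = N(z₀). -/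
/-!
Write `s = σ√(T − t)` for the total volatility over the remaining time, `d₁ = z₀`, `φ = N'`,
and view `V` as a function `C(x, s)`. The Gaussian identity `K φ(d₁ − s) = x φ(d₁)` cancels
every term coming from the dependence of `d₁` on `x` or `s`, which leaves `∂C/∂x = N(d₁)`, `∂C/∂s = x φ(d₁)` and
hence `∂²C/∂x² = φ(d₁)/(x s)`. Since `ds/dt = −σ²/(2s)`, the two terms of the PDE cancel.
-/

open Real Set MeasureTheory

lemma hasDerivAt_integral_Iic {E : Type*} [NormedAddCommGroup E] [NormedSpace ℝ E]
    [CompleteSpace E] {f : ℝ → E} (hf : Integrable f) {z : ℝ} (hz : ContinuousAt f z) :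
    HasDerivAt (fun w => ∫ u in Iic w, f u) (f z) z := by
  have hsplit : (fun w => ∫ u in Iic w, f u) = fun w => (∫ u in Iic 0, f u) + ∫ u in 0..w, f u :=
    funext fun w => by
      rw [← intervalIntegral.integral_Iic_sub_Iic hf.integrableOn hf.integrableOn]
      abel
  rw [hsplit]
  exact (intervalIntegral.integral_hasDerivAt_right hf.intervalIntegrable
    (hf.aestronglyMeasurable.stronglyMeasurableAtFilter) hz).const_add _

namespace BlackScholes

noncomputable def normalPDF (z : ℝ) : ℝ := (√(2 * π))⁻¹ * exp (-z ^ 2 / 2)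

noncomputable def normalCDF (z : ℝ) : ℝ := (√(2 * π))⁻¹ * ∫ u in Iic z, exp (-u ^ 2 / 2)

lemma hasDerivAt_normalCDF (z : ℝ) : HasDerivAt normalCDF (normalPDF z) z := by
  have hint : Integrable fun u : ℝ => exp (-u ^ 2 / 2) := by
    simpa [div_eq_inv_mul, neg_mul] using integrable_exp_neg_mul_sq (by norm_num : (0:ℝ) < 2⁻¹)
  exact (hasDerivAt_integral_Iic hint (by fun_prop)).const_mul _

lemma normalPDF_sub (z s : ℝ) : normalPDF (z - s) = normalPDF z * exp (z * s - s ^ 2 / 2) := by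
  rw [normalPDF, normalPDF, mul_assoc, ← exp_add]
  ring_nf

noncomputable def d₁ (K x s : ℝ) : ℝ := (log (x / K) + s ^ 2 / 2) / s

/-- `V x t = value K x (σ * √(T - t))`. -/
noncomputable def value (K x s : ℝ) : ℝ :=
  normalCDF (d₁ K x s) * x + (1 - normalCDF (d₁ K x s - s)) * K

/-- For `τ < 0` both sides are the junk value `_ / 0 = 0`. -/
lemma d₁_mul_sqrt (K x σ τ : ℝ) :
    d₁ K x (σ * √τ) = (log (x / K) + σ ^ 2 * τ / 2) / (σ * √τ) := by
  rcases le_or_gt 0 τ with hτ | hτ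
  · rw [d₁, mul_pow, sq_sqrt hτ, mul_div_assoc]
  · simp [d₁, sqrt_eq_zero'.2 hτ.le]

section

variable {K x s : ℝ}

lemma mul_normalPDF_d₁_sub (hK : 0 < K) (hx : 0 < x) (hs : s ≠ 0) :
    K * normalPDF (d₁ K x s - s) = x * normalPDF (d₁ K x s) := by
  have hexponent : d₁ K x s * s - s ^ 2 / 2 = log (x / K) := by
    rw [d₁, div_mul_cancel₀ _ hs]
    ring
  rw [normalPDF_sub, hexponent, exp_log (div_pos hx hK)]
  field_simp

lemma hasDerivAt_d₁_left (hK : K ≠ 0) (hx : x ≠ 0) :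
    HasDerivAt (fun y => d₁ K y s) (1 / (x * s)) x := by
  have hlog := ((hasDerivAt_id' x).div_const K).log (div_ne_zero hx hK)
  refine ((hlog.add_const (s ^ 2 / 2)).div_const s).congr_deriv ?_
  field_simp

lemma hasDerivAt_d₁_right (hs : s ≠ 0) :
    HasDerivAt (fun u => d₁ K x u) (1 / 2 - log (x / K) / s ^ 2) s := by
  have hnum := ((hasDerivAt_pow 2 s).div_const 2).const_add (log (x / K))
  refine (hnum.div (hasDerivAt_id' s) hs).congr_deriv ?_
  field_simp
  ring

lemma hasDerivAt_value_left (hK : 0 < K) (hx : 0 < x) (hs : s ≠ 0) :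
    HasDerivAt (fun y => value K y s) (normalCDF (d₁ K x s)) x := by
  have hd := hasDerivAt_d₁_left (s := s) hK.ne' hx.ne'
  have hN₀ := (hasDerivAt_normalCDF _).comp x hd
  have hN₁ := (hasDerivAt_normalCDF _).comp x (hd.sub_const s)
  refine ((hN₀.mul (hasDerivAt_id' x)).add
    (((hasDerivAt_const x 1).sub hN₁).mul_const K)).congr_deriv ?_
  have key := mul_normalPDF_d₁_sub hK hx hs
  simp only [Function.comp_apply]
  field_simp
  linear_combination -key

lemma hasDerivAt_value_right (hK : 0 < K) (hx : 0 < x) (hs : s ≠ 0) :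
    HasDerivAt (fun u => value K x u) (x * normalPDF (d₁ K x s)) s := by
  have hd := hasDerivAt_d₁_right (K := K) (x := x) hs
  have hN₀ := (hasDerivAt_normalCDF _).comp s hd
  have hN₁ := (hasDerivAt_normalCDF _).comp s (hd.sub (hasDerivAt_id' s))
  refine ((hN₀.mul_const x).add
    (((hasDerivAt_const s 1).sub hN₁).mul_const K)).congr_deriv ?_
  have key := mul_normalPDF_d₁_sub hK hx hs
  linear_combination (1 - (1 / 2 - log (x / K) / s ^ 2)) * key

lemma iteratedDeriv_two_value_left (hK : 0 < K) (hx : 0 < x) (hs : s ≠ 0) :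
    iteratedDeriv 2 (fun y => value K y s) x = normalPDF (d₁ K x s) / (x * s) := by
  have hderiv : deriv (fun y => value K y s) =ᶠ[nhds x] fun y => normalCDF (d₁ K y s) := by
    filter_upwards [isOpen_Ioi.mem_nhds hx] with y hy
    exact (hasDerivAt_value_left hK hy hs).deriv
  have hsecond : HasDerivAt (fun y => normalCDF (d₁ K y s)) _ x :=
    (hasDerivAt_normalCDF _).comp x (hasDerivAt_d₁_left hK.ne' hx.ne')
  rw [iteratedDeriv_succ, iteratedDeriv_one, hderiv.deriv_eq, hsecond.deriv]
  ring

end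

lemma hasDerivAt_mul_sqrt_sub {σ T t : ℝ} (ht : t < T) :
    HasDerivAt (fun t => σ * √(T - t)) (σ * (-1 / (2 * √(T - t)))) t :=
  (((hasDerivAt_id t).const_sub T).sqrt (sub_pos.2 ht).ne').const_mul σ

end BlackScholes

open BlackScholes in
theorem black_scholes_zero_rate_general (σ K T : ℝ) (hσ : 0 < σ) (hK : 0 < K)
    (N : ℝ → ℝ)
    (hN : ∀ z : ℝ, N z =
      (Real.sqrt (2 * Real.pi))⁻¹ * ∫ u in Set.Iic z, Real.exp (-u ^ 2 / 2))
    (V : ℝ → ℝ → ℝ)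
    (hV : ∀ x t : ℝ, V x t =
      N ((Real.log (x / K) + σ ^ 2 * (T - t) / 2) / (σ * Real.sqrt (T - t))) * x
        + (1 - N ((Real.log (x / K) + σ ^ 2 * (T - t) / 2) / (σ * Real.sqrt (T - t))
            - σ * Real.sqrt (T - t))) * K) :
    ∀ x : ℝ, 0 < x → ∀ t ∈ Set.Ico (0:ℝ) T,
      (deriv (fun s => V x s) t
        + (1/2) * σ ^ 2 * x ^ 2 * iteratedDeriv 2 (fun y => V y t) x = 0) ∧
      deriv (fun y => V y t) x =
        N ((Real.log (x / K) + σ ^ 2 * (T - t) / 2) / (σ * Real.sqrt (T - t))) := by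
  intro x hx t ht
  obtain rfl : N = normalCDF := funext hN
  obtain rfl : V = fun x t => value K x (σ * √(T - t)) :=
    funext fun x => funext fun t => by rw [hV, value, d₁_mul_sqrt]
  have hr : 0 < √(T - t) := sqrt_pos.2 (sub_pos.2 ht.2)
  have hs : σ * √(T - t) ≠ 0 := (mul_pos hσ hr).ne'
  refine ⟨?_, by rw [(hasDerivAt_value_left hK hx hs).deriv, d₁_mul_sqrt]⟩
  have htime : HasDerivAt (fun s => value K x (σ * √(T - s))) _ t :=
    (hasDerivAt_value_right hK hx hs).comp (h₂ := fun u => value K x u) t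
      (hasDerivAt_mul_sqrt_sub ht.2)
  rw [htime.deriv, iteratedDeriv_two_value_left hK hx hs]
  field_simp
  ring

/-- The zero-interest-rate Black–Scholes function
`V(x,t) = N(z₀)x + (1 − N(z₁))K` satisfies `∂V/∂t + (1/2)σ²x²∂²V/∂x² = 0`
on `ℝ₊ × [0,T)` and `∂V/∂x = N(z₀)`. -/
theorem black_scholes_zero_rate (σ K T : ℝ) (hσ : 0 < σ) (hK : 0 < K) (hT : 0 < T)
    (N : ℝ → ℝ)
    (hN : ∀ z : ℝ, N z =
      (Real.sqrt (2 * Real.pi))⁻¹ * ∫ u in Set.Iic z, Real.exp (-u ^ 2 / 2))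
    (V : ℝ → ℝ → ℝ)
    (hV : ∀ x t : ℝ, V x t =
      N ((Real.log (x / K) + σ ^ 2 * (T - t) / 2) / (σ * Real.sqrt (T - t))) * x
        + (1 - N ((Real.log (x / K) + σ ^ 2 * (T - t) / 2) / (σ * Real.sqrt (T - t))
            - σ * Real.sqrt (T - t))) * K) :
    ∀ x : ℝ, 0 < x → ∀ t ∈ Set.Ico (0:ℝ) T,
      (deriv (fun s => V x s) t
        + (1/2) * σ ^ 2 * x ^ 2 * iteratedDeriv 2 (fun y => V y t) x = 0) ∧
      deriv (fun y => V y t) x =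
        N ((Real.log (x / K) + σ ^ 2 * (T - t) / 2) / (σ * Real.sqrt (T - t))) :=
  black_scholes_zero_rate_general σ K T hσ hK N hN V hV
end
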